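/- arXiv:math/9901151 — 5 statements merged into one kernel-verified Lean document; each statement's English description precedes it below -/
import Mathlib

section
/- Let a ∈ G∖N and n ∈ N. Then: (1) N(na) = nN(a) and N(an) = N(a)n; (2) N(b⁻¹ab) = b⁻¹N(a)b for all b ∈ G; (3) N(a) ≠ ∅; (4) if n ∈ N(a) then n⁻¹ ∉ N(a⁻¹); (5) there exists a' ∈ Na with 1 ∈ N(a'). -/
/-!
Parts (1), (2) and (4) are identities in `D`: the maps `t ↦ u t v` that preserve `N` also
preserve `N(·)`, and `a⁻¹ + t⁻¹ = a⁻¹ (a + t) t⁻¹`. Parts (3) and (5) amount to the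
Bergelson–Shapiro theorem `N - N = D`.

For that, the finitely many cosets of `N` cover `D ∖ {0}`, which is additively thick because `D`
is infinite. Piecewise syndeticity is partition regular, so some coset, hence `N` itself, is
piecewise syndetic: `E + N` is thick for a finite `E`. Ramsey's theorem gives `P₀, P₁, …` with
`Pᵢ - Pⱼ ∈ N` for `j < i`. Translating `P₀ a, …, P_{|E|} a` into `E + N` and pigeonholing on `E`
gives `(Pᵢ - Pⱼ) a ∈ N - N`, hence `a ∈ N - N`.
-/

open scoped Pointwise

/-- The subset of `D` consisting of (the values of) the units belonging to `N`. -/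
def unitsSet {D : Type*} [DivisionRing D] (N : Subgroup Dˣ) : Set D :=
  Units.val '' (N : Set Dˣ)

/-- For `a : D`, the set `N(a) = {n ∈ N : a + n ∈ N}`. -/
def nSet {D : Type*} [DivisionRing D] (N : Subgroup Dˣ) (a : D) : Set D :=
  {x : D | x ∈ unitsSet N ∧ a + x ∈ unitsSet N}

/-- The commuting graph of a group: vertices are the nonidentity elements,
two distinct nonidentity elements are adjacent iff they commute. (The identity is
an isolated vertex.) -/
def commGraph (Q : Type*) [Group Q] : SimpleGraph Q where
  Adj a b := a ≠ b ∧ a ≠ 1 ∧ b ≠ 1 ∧ a * b = b * a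
  symm := by
    constructor
    intro a b h
    exact ⟨Ne.symm h.1, h.2.2.1, h.2.1, h.2.2.2.symm⟩
  loopless := by constructor; intro a h; exact h.1 rfl

/-- `distGT Γ u v k` : there is no path (walk) of length at most `k` from `u` to `v`,
i.e. `d(u,v) > k`. -/
def distGT {Q : Type*} (Γ : SimpleGraph Q) (u v : Q) (k : ℕ) : Prop :=
  ∀ p : Γ.Walk u v, k < p.length

open Filter in
theorem exists_strictMono_forall_lt_eq {κ : Type*} [Finite κ] (f : ℕ → ℕ → κ) :
    ∃ (g : ℕ → ℕ) (k : κ), StrictMono g ∧ ∀ i j, i < j → f (g i) (g j) = k := by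
  let U := hyperfilter ℕ
  have color (h : ℕ → κ) : ∃ k, ∀ᶠ i in U, h i = k := by
    obtain ⟨k, hk⟩ := (U.map h).eq_pure_of_finite
    exact ⟨k, show {k} ∈ U.map h by rw [hk]; rfl⟩
  -- `c i` is the colour of the pairs `(i, j)` for `U`-almost all `j`
  choose c hc using fun i => color (f i)
  obtain ⟨k, hk⟩ := color c
  let T := {S : Set ℕ // S ∈ U ∧ ∀ i ∈ S, c i = k}
  have step (S : T) : ∃ i ∈ S.1, ∃ S' : T, S'.1 ⊆ S.1 ∧ ∀ j ∈ S'.1, i < j ∧ f i j = k := by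
    obtain ⟨S, hSU, hSk⟩ := S
    obtain ⟨i, hi⟩ := U.nonempty_of_mem hSU
    have hgt : ∀ᶠ j in U, i < j := Nat.hyperfilter_le_atTop (eventually_gt_atTop i)
    have hlarge : ∀ᶠ j in U, i < j ∧ f i j = k := hgt.and (hSk i hi ▸ hc i)
    exact ⟨i, hi, ⟨S ∩ {j | i < j ∧ f i j = k}, inter_mem hSU hlarge, fun j hj => hSk j hj.1⟩,
      Set.inter_subset_left, fun j hj => hj.2⟩
  choose pt hpt next hnext hnext' using step
  let S : ℕ → T := fun n => next^[n] ⟨{i | c i = k}, hk, fun _ h => h⟩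
  have hanti : Antitone fun n => (S n).1 := antitone_nat_of_succ_le fun n => by
    simpa only [S, Function.iterate_succ_apply'] using hnext (S n)
  have key {m n : ℕ} (hmn : m < n) : pt (S m) < pt (S n) ∧ f (pt (S m)) (pt (S n)) = k := by
    refine hnext' (S m) _ ?_
    have : (S (m + 1)).1 = (next (S m)).1 := by simp only [S, Function.iterate_succ_apply']
    exact this ▸ hanti hmn (hpt (S n))
  exact ⟨fun n => pt (S n), k, fun _ _ h => (key h).1, fun _ _ h => (key h).2⟩

section PiecewiseSyndetic

variable {A B : Type*} [AddCommGroup A] [AddCommGroup B]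

def IsThick (S : Set A) : Prop :=
  ∀ F : Finset A, ∃ t, ∀ f ∈ F, f + t ∈ S

def IsPiecewiseSyndetic (S : Set A) : Prop :=
  ∃ E : Finset A, IsThick ((E : Set A) + S)

theorem isThick_compl_singleton [Infinite A] (a : A) : IsThick ({a}ᶜ : Set A) := by
  classical
  intro F
  obtain ⟨t, ht⟩ := Infinite.exists_notMem_finset (F.image (a - ·))
  refine ⟨t, fun f hf hft => ht (Finset.mem_image.2 ⟨f, hf, ?_⟩)⟩
  rw [← Set.mem_singleton_iff.1 hft]
  abel

theorem IsThick.isPiecewiseSyndetic {S : Set A} (h : IsThick S) : IsPiecewiseSyndetic S :=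
  ⟨{0}, by simpa using h⟩

theorem not_isPiecewiseSyndetic_empty : ¬ IsPiecewiseSyndetic (∅ : Set A) := by
  rintro ⟨E, hE⟩
  obtain ⟨t, ht⟩ := hE {0}
  simpa using ht 0 (Finset.mem_singleton_self 0)

theorem IsPiecewiseSyndetic.image {S : Set A} (h : IsPiecewiseSyndetic S) (φ : A ≃+ B) :
    IsPiecewiseSyndetic (φ '' S) := by
  classical
  obtain ⟨E, hE⟩ := h
  refine ⟨E.image φ, fun F => ?_⟩
  obtain ⟨t, ht⟩ := hE (F.image φ.symm)
  refine ⟨φ t, fun f hf => ?_⟩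
  rw [Finset.coe_image, ← Set.image_add]
  exact ⟨φ.symm f + t, ht _ (Finset.mem_image_of_mem _ hf), by simp⟩

theorem IsPiecewiseSyndetic.of_union {S T : Set A} (h : IsPiecewiseSyndetic (S ∪ T)) :
    IsPiecewiseSyndetic S ∨ IsPiecewiseSyndetic T := by
  classical
  refine or_iff_not_imp_left.2 fun hS => ?_
  obtain ⟨E, hE⟩ := h
  -- `F₁` witnesses that `E + S` is not thick; shifting by `-F₁` moves the rest into `E + T`.
  obtain ⟨F₁, hF₁⟩ : ∃ F₁ : Finset A, ∀ t, ∃ g ∈ F₁, g + t ∉ (E : Set A) + S := by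
    simpa [IsThick] using fun h => hS ⟨E, h⟩
  refine ⟨E - F₁, fun F => ?_⟩
  obtain ⟨t, ht⟩ := hE (F₁ + F)
  refine ⟨t, fun f hf => ?_⟩
  obtain ⟨g, hg, hgS⟩ := hF₁ (f + t)
  obtain ⟨e, he, c, hc, hec⟩ := Set.mem_add.1 (ht (g + f) (Finset.add_mem_add hg hf))
  have hcT : c ∈ T := hc.resolve_left fun hcS =>
    hgS (Set.mem_add.2 ⟨e, he, c, hcS, by rw [hec, add_assoc]⟩)
  refine Set.mem_add.2 ⟨e - g, by rw [Finset.coe_sub]; exact Set.sub_mem_sub he hg, c, hcT, ?_⟩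
  rw [sub_add_eq_add_sub, hec]
  abel

theorem IsPiecewiseSyndetic.exists_of_iUnion {ι : Type*} [Finite ι] {S : ι → Set A}
    (h : IsPiecewiseSyndetic (⋃ i, S i)) : ∃ i, IsPiecewiseSyndetic (S i) := by
  classical
  have := Fintype.ofFinite ι
  suffices ∀ s : Finset ι, IsPiecewiseSyndetic (⋃ i ∈ s, S i) → ∃ i, IsPiecewiseSyndetic (S i) from
    this Finset.univ (by simpa using h)
  intro s
  induction s using Finset.induction_on with
  | empty => rw [Set.biUnion_empty_finset]; exact fun h => absurd h not_isPiecewiseSyndetic_empty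
  | insert i s _ ih =>
    rw [Finset.set_biUnion_insert]
    exact fun h => h.of_union.elim (fun hi => ⟨i, hi⟩) ih

end PiecewiseSyndetic

section DivisionRing

variable {D : Type*} [DivisionRing D] {N : Subgroup Dˣ}

theorem val_mem_unitsSet {u : Dˣ} : (u : D) ∈ unitsSet N ↔ u ∈ N :=
  Units.val_injective.mem_set_image

theorem units_mul_mem_unitsSet {w : Dˣ} (hw : w ∈ N) {x : D} (hx : x ∈ unitsSet N) :
    (w : D) * x ∈ unitsSet N := by
  obtain ⟨u, hu, rfl⟩ := hx
  exact val_mem_unitsSet.2 (N.mul_mem hw hu)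

theorem isPiecewiseSyndetic_unitsSet [Infinite D] (N : Subgroup Dˣ) [Finite (Dˣ ⧸ N)] :
    IsPiecewiseSyndetic (unitsSet N) := by
  have hcover : ({0}ᶜ : Set D) = ⋃ q : Dˣ ⧸ N, Units.val '' (QuotientGroup.mk ⁻¹' {q}) := by
    ext x
    simp [eq_comm]
  have hps := (isThick_compl_singleton (0 : D)).isPiecewiseSyndetic
  rw [hcover] at hps
  obtain ⟨q, hq⟩ := hps.exists_of_iUnion
  obtain ⟨c, rfl⟩ := QuotientGroup.mk_surjective q
  convert hq.image (DistribMulAction.toAddEquiv D c⁻¹)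
  ext x
  simp only [unitsSet, Set.mem_image, SetLike.mem_coe, DistribMulAction.toAddEquiv_apply,
    Set.image_smul, Set.mem_smul_set, Set.mem_preimage, Set.mem_singleton_iff, QuotientGroup.eq,
    exists_exists_and_eq_and]
  constructor
  · rintro ⟨u, hu, rfl⟩
    exact ⟨c * u, by simpa using N.inv_mem hu, by simp [Units.smul_def]⟩
  · rintro ⟨a, ha, rfl⟩
    exact ⟨c⁻¹ * a, by simpa using N.inv_mem ha, by simp [Units.smul_def]⟩

theorem exists_seq_sub_mem_unitsSet [Infinite D] (N : Subgroup Dˣ) [Finite (Dˣ ⧸ N)] :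
    ∃ P : ℕ → D, ∀ i j, j < i → P i - P j ∈ unitsSet N := by
  classical
  let x := Infinite.natEmbedding D
  let cls : D → Dˣ ⧸ N := fun y =>
    if h : y = 0 then ((1 : Dˣ) : Dˣ ⧸ N) else (Units.mk0 y h : Dˣ)
  obtain ⟨g, K, hg, hK⟩ := exists_strictMono_forall_lt_eq fun i j => cls (x j - x i)
  have hdiff {i j : ℕ} (hij : i < j) :
      ∃ u : Dˣ, (u : D) = x (g j) - x (g i) ∧ (u : Dˣ ⧸ N) = K := by
    have h : x (g j) - x (g i) ≠ 0 := sub_ne_zero.2 (x.injective.ne (hg hij).ne')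
    exact ⟨Units.mk0 _ h, rfl, by simpa [cls, h] using hK i j hij⟩
  obtain ⟨δ, hδ, hδK⟩ := hdiff zero_lt_one
  refine ⟨fun i => (δ⁻¹ : Dˣ) * x (g (i + 1)), fun i j hji => ?_⟩
  obtain ⟨u, hu, huK⟩ := hdiff (Nat.succ_lt_succ hji)
  refine ⟨δ⁻¹ * u, QuotientGroup.eq.1 (hδK.trans huK.symm), ?_⟩
  simp [hu, mul_sub]

theorem unitsSet_sub_unitsSet [Infinite D] (N : Subgroup Dˣ) [Finite (Dˣ ⧸ N)] :
    unitsSet N - unitsSet N = Set.univ := by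
  classical
  obtain ⟨E, hE⟩ := isPiecewiseSyndetic_unitsSet N
  obtain ⟨P, hP⟩ := exists_seq_sub_mem_unitsSet N
  refine Set.eq_univ_of_forall fun a => ?_
  obtain ⟨t, ht⟩ := hE ((Finset.range (E.card + 1)).image fun i => P i * a)
  have hmem (i : ℕ) (hi : i ∈ Finset.range (E.card + 1)) :
      ∃ e ∈ E, ∃ γ ∈ unitsSet N, e + γ = P i * a + t :=
    Set.mem_add.1 (ht _ (Finset.mem_image_of_mem _ hi))
  choose! e he γ hγ heγ using hmem
  -- pigeonhole: two of the `|E| + 1` translates `P i * a + t` use the same element of `E`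
  obtain ⟨i, hi, j, hj, hne, hij⟩ := Finset.exists_ne_map_eq_of_card_lt_of_maps_to
    (by simp) (f := e) (fun i hi => he i hi)
  wlog hji : j < i generalizing i j
  · exact this j hj i hi hne.symm hij.symm (hne.lt_or_gt.resolve_right hji)
  obtain ⟨w, hwN, hwP⟩ : ∃ w ∈ N, (w : D) = P i - P j := hP i j hji
  have hγw : γ i - γ j = w * a := by
    rw [hwP, sub_mul, eq_sub_of_add_eq' (heγ i hi), eq_sub_of_add_eq' (heγ j hj), hij]
    abel
  refine Set.mem_sub.2 ⟨(w⁻¹ : Dˣ) * γ i, units_mul_mem_unitsSet (N.inv_mem hwN) (hγ i hi),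
    (w⁻¹ : Dˣ) * γ j, units_mul_mem_unitsSet (N.inv_mem hwN) (hγ j hj), ?_⟩
  rw [← mul_sub, hγw, Units.inv_mul_cancel_left]

theorem nSet_nonempty [Infinite D] (N : Subgroup Dˣ) [Finite (Dˣ ⧸ N)] (a : D) :
    (nSet N a).Nonempty := by
  obtain ⟨p, hp, q, hq, hpq⟩ := Set.mem_sub.1 (unitsSet_sub_unitsSet N ▸ Set.mem_univ a)
  exact ⟨q, hq, by rwa [← hpq, sub_add_cancel]⟩

theorem nSet_units_mul_mul {u v : Dˣ} (huv : ∀ x : Dˣ, u * x * v ∈ N ↔ x ∈ N) (a : D) :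
    nSet N ((u : D) * a * v) = (fun t => (u : D) * t * v) '' nSet N a := by
  have hU (y : D) : (u : D) * y * v ∈ unitsSet N ↔ y ∈ unitsSet N := by
    constructor
    · rintro ⟨w, hw, hwy⟩
      have hy : y = (u⁻¹ * w * v⁻¹ : Dˣ) := by simp [hwy, mul_assoc]
      rw [hy, val_mem_unitsSet, ← huv]
      simpa [mul_assoc] using hw
    · rintro ⟨x, hx, rfl⟩
      exact ⟨u * x * v, (huv x).2 hx, by simp⟩
  ext x
  obtain ⟨y, rfl⟩ : ∃ y, x = (u : D) * y * v := ⟨(u⁻¹ : Dˣ) * x * (v⁻¹ : Dˣ), by simp [mul_assoc]⟩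
  have hinj : Function.Injective fun t : D => (u : D) * t * v := fun s t hst => by simpa using hst
  rw [hinj.mem_set_image]
  simp only [nSet, Set.mem_ofPred_eq, ← mul_add, ← add_mul, hU]

theorem nSet_units_mul {n : Dˣ} (hn : n ∈ N) (a : D) :
    nSet N ((n : D) * a) = (fun t => (n : D) * t) '' nSet N a := by
  simpa using nSet_units_mul_mul (u := n) (v := 1)
    (fun x => by simpa using N.mul_mem_cancel_left hn) a

theorem nSet_mul_units {n : Dˣ} (hn : n ∈ N) (a : D) :
    nSet N (a * n) = (fun t => t * (n : D)) '' nSet N a := by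
  simpa using nSet_units_mul_mul (u := 1) (v := n)
    (fun x => by simpa using N.mul_mem_cancel_right hn) a

theorem nSet_conj [N.Normal] (b : Dˣ) (a : D) :
    nSet N ((b : D)⁻¹ * a * b) = (fun t => (b : D)⁻¹ * t * b) '' nSet N a := by
  simpa using nSet_units_mul_mul (u := b⁻¹) (v := b)
    (fun x => by rw [‹N.Normal›.mem_comm_iff, mul_inv_cancel_left]) a

theorem inv_notMem_nSet_inv {a : Dˣ} (ha : a ∉ N) {t : D} (ht : t ∈ nSet N a) :
    t⁻¹ ∉ nSet N ((a⁻¹ : Dˣ) : D) := by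
  obtain ⟨⟨τ, hτ, rfl⟩, μ, hμ, hμa⟩ := ht
  rintro ⟨-, ρ, hρ, hρa⟩
  have hρτ : ρ * τ = a⁻¹ * μ := Units.ext (by simp [hρa, hμa, add_mul, mul_add, add_comm])
  have ha_inv : a⁻¹ ∈ N :=
    eq_mul_inv_of_mul_eq hρτ.symm ▸ N.mul_mem (N.mul_mem hρ hτ) (N.inv_mem hμ)
  exact ha (inv_mem_iff.1 ha_inv)

end DivisionRing

theorem stmt_1_general {D : Type*} [DivisionRing D] [Infinite D] (N : Subgroup Dˣ)
    [N.Normal]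
    (hfin : Finite (Dˣ ⧸ N))
    (a : Dˣ) (ha : a ∉ N) (n : Dˣ) (hn : n ∈ N) :
    -- (1) N(na) = nN(a) and N(an) = N(a)n
    (nSet N ((n * a : Dˣ) : D) = (fun t => (n : D) * t) '' nSet N (a : D) ∧
      nSet N ((a * n : Dˣ) : D) = (fun t => t * (n : D)) '' nSet N (a : D)) ∧
    -- (2) N(b⁻¹ab) = b⁻¹N(a)b for all b ∈ G
    (∀ b : Dˣ, nSet N ((b⁻¹ * a * b : Dˣ) : D)
        = (fun t => (b : D)⁻¹ * t * (b : D)) '' nSet N (a : D)) ∧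
    -- (3) N(a) ≠ ∅
    (nSet N (a : D)).Nonempty ∧
    -- (4) if n ∈ N(a) then n⁻¹ ∉ N(a⁻¹)
    (∀ t : D, t ∈ nSet N (a : D) → t⁻¹ ∉ nSet N ((a⁻¹ : Dˣ) : D)) ∧
    -- (5) there exists a' ∈ Na with 1 ∈ N(a')
    (∃ a' : Dˣ, (∃ m ∈ N, a' = m * a) ∧ (1 : D) ∈ nSet N (a' : D)) := by
  obtain ⟨t, ht⟩ := nSet_nonempty N (a : D)
  obtain ⟨τ, hτ, rfl⟩ := ht.1
  refine ⟨⟨by simpa using nSet_units_mul hn a, by simpa using nSet_mul_units hn a⟩,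
    fun b => by simpa using nSet_conj b a, ⟨τ, ht⟩, fun t => inv_notMem_nSet_inv ha,
    τ⁻¹ * a, ⟨τ⁻¹, N.inv_mem hτ, rfl⟩, ?_⟩
  rw [Units.val_mul, nSet_units_mul (N.inv_mem hτ)]
  exact ⟨τ, ht, by simp⟩

/-- Basic properties of the sets `N(a)` for `a ∈ G∖N`, `n ∈ N`. -/
theorem stmt_1 {D : Type*} [DivisionRing D] [Infinite D] (N : Subgroup Dˣ)
    [N.Normal] (hF : ∀ x : Dˣ, (x : D) ∈ Set.center D → x ∈ N)
    (hfin : Finite (Dˣ ⧸ N))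
    (a : Dˣ) (ha : a ∉ N) (n : Dˣ) (hn : n ∈ N) :
    -- (1) N(na) = nN(a) and N(an) = N(a)n
    (nSet N ((n * a : Dˣ) : D) = (fun t => (n : D) * t) '' nSet N (a : D) ∧
      nSet N ((a * n : Dˣ) : D) = (fun t => t * (n : D)) '' nSet N (a : D)) ∧
    -- (2) N(b⁻¹ab) = b⁻¹N(a)b for all b ∈ G
    (∀ b : Dˣ, nSet N ((b⁻¹ * a * b : Dˣ) : D)
        = (fun t => (b : D)⁻¹ * t * (b : D)) '' nSet N (a : D)) ∧
    -- (3) N(a) ≠ ∅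
    (nSet N (a : D)).Nonempty ∧
    -- (4) if n ∈ N(a) then n⁻¹ ∉ N(a⁻¹)
    (∀ t : D, t ∈ nSet N (a : D) → t⁻¹ ∉ nSet N ((a⁻¹ : Dˣ) : D)) ∧
    -- (5) there exists a' ∈ Na with 1 ∈ N(a')
    (∃ a' : Dˣ, (∃ m ∈ N, a' = m * a) ∧ (1 : D) ∈ nSet N (a' : D)) :=
  stmt_1_general N hfin a ha n hn
end

section
/- Let a ∈ G∖N and n ∈ N, and suppose a + n ∈ G∖N. Then (a + n)* commutes with a* in G*; that is, (a + n)* lies in the centralizer of a* in G*. -/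
open scoped Pointwise

/-
`n⁻¹ (a + n) = n⁻¹ a + 1` commutes with `n⁻¹ a`; passing to `G/N`
kills `n`, so `(a + n)*` commutes with `a*`.
-/

theorem Units.commute_inv_mul_of_val_eq_add {R : Type*} [Semiring R] {a n c : Rˣ}
    (hc : (c : R) = a + n) : Commute (n⁻¹ * c) (n⁻¹ * a) := by
  have hc' : ((n⁻¹ * c : Rˣ) : R) = ((n⁻¹ * a : Rˣ) : R) + 1 := by
    rw [Units.val_mul, Units.val_mul, hc, mul_add, Units.inv_mul]
  refine Commute.units_of_val ?_
  rw [hc']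
  exact (Commute.refl _).add_left (Commute.one_left _)

theorem stmt_3_general {D : Type*} [DivisionRing D] (N : Subgroup Dˣ)
    [N.Normal]
    (a : Dˣ) (n : Dˣ) (hn : n ∈ N)
    (c : Dˣ) (hc : (c : D) = (a : D) + (n : D)) :
    Commute (QuotientGroup.mk c : Dˣ ⧸ N) (QuotientGroup.mk a) := by
  have hn1 : (QuotientGroup.mk' N) n = 1 := (QuotientGroup.eq_one_iff n).2 hn
  simpa only [map_mul, map_inv, hn1, inv_one, one_mul, QuotientGroup.mk'_apply] using
    (Units.commute_inv_mul_of_val_eq_add hc).map (QuotientGroup.mk' N)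

/-- If `a ∈ G∖N`, `n ∈ N` and `a + n ∈ G∖N`, then `(a+n)*`
commutes with `a*` in `G* = G/N`. -/
theorem stmt_3 {D : Type*} [DivisionRing D] [Infinite D] (N : Subgroup Dˣ)
    [N.Normal] (hF : ∀ x : Dˣ, (x : D) ∈ Set.center D → x ∈ N)
    (hfin : Finite (Dˣ ⧸ N))
    (a : Dˣ) (ha : a ∉ N) (n : Dˣ) (hn : n ∈ N)
    (c : Dˣ) (hc : (c : D) = (a : D) + (n : D)) (hcN : c ∉ N) :
    Commute (QuotientGroup.mk c : Dˣ ⧸ N) (QuotientGroup.mk a) :=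
  stmt_3_general N a n hn c hc
end

section
/- Let x, y ∈ G∖N and let n̄ ∈ N∖(N(x) ∪ N(y)). Suppose d(x*, y*) > 2. Then n̄ + m ∈ N for every m ∈ N(x + n̄) ∩ N(y + n̄). -/
/-!
If `a + b ∈ N` then `a*` and `b*` commute in `G/N`, because `a⁻¹b` commutes with
`1 + a⁻¹b = a⁻¹(a + b)` and the latter lies in `N`. Were `w = n̄ + m ∉ N`, then `x + w` and
`y + w` would lie in `N`, so `x* — w* — y*` would be a path of length at most two in `Δ`.
-/

open scoped Pointwise

open QuotientGroup

lemma QuotientGroup.commute_mk_of_add_eq_mem {R : Type*} [Ring R] (N : Subgroup Rˣ) [N.Normal]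
    {a b p : Rˣ} (hp : p ∈ N) (hab : (a : R) + b = p) :
    Commute (a : Rˣ ⧸ N) b := by
  have key : Commute (a⁻¹ * b) (a⁻¹ * p) := by
    apply Units.ext
    push_cast
    rw [← hab, mul_add, Units.inv_mul]
    noncomm_ring
  have hp1 : (p : Rˣ ⧸ N) = 1 := (eq_one_iff p).mpr hp
  have hc : Commute (a : Rˣ ⧸ N) (a⁻¹ * b) := by
    simpa [hp1] using (key.map (mk' N)).inv_right.symm
  simpa using (Commute.refl (a : Rˣ ⧸ N)).mul_right hc

section commGraph

variable {Q : Type*} [Group Q]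

lemma commGraph_exists_walk_length_le_one {a b : Q} (ha : a ≠ 1) (hb : b ≠ 1)
    (h : Commute a b) : ∃ p : (commGraph Q).Walk a b, p.length ≤ 1 := by
  by_cases hab : a = b
  · subst hab
    exact ⟨.nil, zero_le_one⟩
  · exact ⟨.cons ⟨hab, ha, hb, h.eq⟩ .nil, le_rfl⟩

lemma not_distGT_two_of_commute {u v w : Q} (hu : u ≠ 1) (hv : v ≠ 1) (hw : w ≠ 1)
    (huw : Commute u w) (hwv : Commute w v) : ¬ distGT (commGraph Q) u v 2 := by
  intro hd
  obtain ⟨p, hp⟩ := commGraph_exists_walk_length_le_one hu hw huw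
  obtain ⟨q, hq⟩ := commGraph_exists_walk_length_le_one hw hv hwv
  have := hd (p.append q)
  rw [SimpleGraph.Walk.length_append] at this
  omega

end commGraph

theorem stmt_9_general {D : Type*} [DivisionRing D] (N : Subgroup Dˣ)
    [N.Normal]
    (x y : Dˣ) (hx : x ∉ N) (hy : y ∉ N)
    (nb : D)
    (hd : distGT (commGraph (Dˣ ⧸ N)) (QuotientGroup.mk x) (QuotientGroup.mk y) 2) :
    ∀ m ∈ nSet N ((x : D) + nb) ∩ nSet N ((y : D) + nb), nb + m ∈ unitsSet N := by
  rintro m ⟨⟨-, p, hpN, hp⟩, ⟨-, q, hqN, hq⟩⟩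
  by_contra hw
  have hw0 : nb + m ≠ 0 := fun h0 =>
    hx (by rwa [show x = p from Units.ext (by rw [hp, add_assoc, h0, add_zero])])
  set w := Units.mk0 (nb + m) hw0
  have hwN : w ∉ N := fun h => hw ⟨w, h, rfl⟩
  refine not_distGT_two_of_commute (mt (eq_one_iff x).mp hx) (mt (eq_one_iff y).mp hy)
    (mt (eq_one_iff w).mp hwN) ?_ ?_ hd
  · exact commute_mk_of_add_eq_mem N hpN (by rw [hp, Units.val_mk0, add_assoc])
  · exact (commute_mk_of_add_eq_mem N hqN (by rw [hq, Units.val_mk0, add_assoc])).symm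

/-- Let `x, y ∈ G∖N` and `n̄ ∈ N∖(N(x) ∪ N(y))`. If
`d(x*, y*) > 2`, then `n̄ + m ∈ N` for every `m ∈ N(x + n̄) ∩ N(y + n̄)`. -/
theorem stmt_9 {D : Type*} [DivisionRing D] [Infinite D] (N : Subgroup Dˣ)
    [N.Normal] (hF : ∀ x : Dˣ, (x : D) ∈ Set.center D → x ∈ N)
    (hfin : Finite (Dˣ ⧸ N))
    (x y : Dˣ) (hx : x ∉ N) (hy : y ∉ N)
    (nb : D) (hnb : nb ∈ unitsSet N \ (nSet N (x : D) ∪ nSet N (y : D)))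
    (hd : distGT (commGraph (Dˣ ⧸ N)) (QuotientGroup.mk x) (QuotientGroup.mk y) 2) :
    ∀ m ∈ nSet N ((x : D) + nb) ∩ nSet N ((y : D) + nb), nb + m ∈ unitsSet N :=
  stmt_9_general N x y hx hy nb hd
end

section
/- Let x*, y* ∈ G*∖{1}. Then each of the following conditions implies In(x*, y*): (1) d(x*, y*) > 4; (2) d(x*, y*) > 2 and d(x*, (x⁻¹y)*) > 3. -/
/-!
If `N(a)` and `N(b)` are not nested, pick `α ∈ N(a) ∖ N(b)` and `β ∈ N(b) ∖ N(a)`. Whenever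
`v = u + n` with `n ∈ N`, the elements `u n⁻¹` and `v n⁻¹ = u n⁻¹ + 1` commute, so `u*` and `v*`
commute in `G/N`. Applied to `a, a + β, -(b - a), b + α, b` this gives a walk
`x* — (a + β)* — (b - a)* — (b + α)* — y*`, and applied to `a, b = a + (b - a)` it shows that
`x* g*⁻¹` and `y* g*⁻¹` commute for `g = b - a`. The first walk contradicts `d(x*, y*) > 4`
(if `g* = 1`, the second relation says that `x*` and `y*` commute). Conjugating the second
relation by `g*⁻¹` makes `g*⁻¹x*` commute with `(x⁻¹y)*`, which gives a walk
`x* — (a + β)* — g*⁻¹x* — (x⁻¹y)*` of length 3, unless `g* ∈ {1, x*}`, in which case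
`d(x*, y*) ≤ 2`.
-/

open scoped Pointwise

/-- The relation `In(x*, y*)`: for all `a ∈ Nx` and `b ∈ Ny`, either
`N(a) ⊆ N(b)` or `N(b) ⊆ N(a)`. -/
def inRel {D : Type*} [DivisionRing D] (N : Subgroup Dˣ) (x y : Dˣ) : Prop :=
  ∀ a b : Dˣ, (∃ n ∈ N, a = n * x) → (∃ n ∈ N, b = n * y) →
    nSet N (a : D) ⊆ nSet N (b : D) ∨ nSet N (b : D) ⊆ nSet N (a : D)

section CommutingGraph

variable {V : Type*} {Γ : SimpleGraph V} {u v w : V} {j k : ℕ}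

theorem not_distGT_self (Γ : SimpleGraph V) (u : V) (k : ℕ) : ¬ distGT Γ u u k :=
  fun h => Nat.not_lt_zero k (h .nil)

theorem distGT.mono (h : distGT Γ u w k) (hjk : j ≤ k) : distGT Γ u w j :=
  fun p => hjk.trans_lt (h p)

theorem distGT.of_adj_or_eq (h : distGT Γ u w (k + 1)) (huv : u = v ∨ Γ.Adj u v) :
    distGT Γ v w k := by
  rcases huv with rfl | huv
  · exact h.mono k.le_succ
  · intro p
    have := h (.cons huv p)
    rw [SimpleGraph.Walk.length_cons] at this
    omega

variable {Q : Type*} [Group Q] {X Y E G C : Q}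

theorem commGraph_adj_or_eq_of_commute (hX : X ≠ 1) (hY : Y ≠ 1) (h : Commute X Y) :
    X = Y ∨ (commGraph Q).Adj X Y := by
  by_cases hXY : X = Y
  · exact .inl hXY
  · exact .inr ⟨hXY, hX, hY, h⟩

theorem distGT.of_commute {Z : Q} (h : distGT (commGraph Q) X Z (k + 1)) (hX : X ≠ 1)
    (hY : Y ≠ 1) (hXY : Commute X Y) : distGT (commGraph Q) Y Z k :=
  h.of_adj_or_eq (commGraph_adj_or_eq_of_commute hX hY hXY)

theorem commute_inv_mul_inv_mul_of_commute_mul_inv (h : Commute (X * G⁻¹) (Y * G⁻¹)) :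
    Commute (G⁻¹ * X) (X⁻¹ * Y) := by
  have hconj : Commute (G⁻¹ * X) (G⁻¹ * Y) := by
    simpa only [mul_assoc, inv_mul_cancel, mul_one, inv_inv] using (Commute.conj_iff G⁻¹).2 h
  simpa only [mul_inv_rev, inv_inv, mul_assoc, mul_inv_cancel_left] using
    (Commute.inv_right (Commute.refl (G⁻¹ * X))).mul_right hconj

def CommutingChain (X Y : Q) : Prop :=
  ∃ E G C : Q, E ≠ 1 ∧ C ≠ 1 ∧ Commute X E ∧ Commute E G ∧ Commute G C ∧ Commute C Y ∧
    Commute (X * G⁻¹) (Y * G⁻¹)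

theorem CommutingChain.not_distGT_four (h : CommutingChain X Y) (hX : X ≠ 1) (hY : Y ≠ 1) :
    ¬ distGT (commGraph Q) X Y 4 := by
  obtain ⟨E, G, C, hE, hC, hXE, hEG, hGC, hCY, hXYG⟩ := h
  intro hd
  by_cases hG : G = 1
  · rw [hG, inv_one, mul_one, mul_one] at hXYG
    exact not_distGT_self _ _ _ ((hd.mono (j := 1) (by norm_num)).of_commute hX hY hXYG)
  · exact not_distGT_self _ _ _ ((((hd.of_commute hX hE hXE).of_commute hE hG hEG).of_commute
      hG hC hGC).of_commute hC hY hCY)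

theorem CommutingChain.not_distGT_three (h : CommutingChain X Y) (hX : X ≠ 1) (hY : Y ≠ 1)
    (hd : distGT (commGraph Q) X Y 2) : ¬ distGT (commGraph Q) X (X⁻¹ * Y) 3 := by
  obtain ⟨E, G, C, hE, hC, hXE, hEG, hGC, hCY, hXYG⟩ := h
  intro hd'
  by_cases hG : G = 1
  · rw [hG, inv_one, mul_one, mul_one] at hXYG
    exact not_distGT_self _ _ _ ((hd.mono (j := 1) (by norm_num)).of_commute hX hY hXYG)
  by_cases hGX : G = X
  · subst hGX
    exact not_distGT_self _ _ _ (((hd.mono (j := 2) le_rfl).of_commute hG hC hGC).of_commute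
      hC hY hCY)
  by_cases hXY : X = Y
  · subst hXY
    exact not_distGT_self _ _ _ hd
  have hT : G⁻¹ * X ≠ 1 := by rwa [Ne, inv_mul_eq_one]
  have hH : X⁻¹ * Y ≠ 1 := by rwa [Ne, inv_mul_eq_one]
  have hET : Commute E (G⁻¹ * X) := hEG.inv_right.mul_right hXE.symm
  exact not_distGT_self _ _ _ (((hd'.of_commute hX hE hXE).of_commute hE hT hET).of_commute
    hT hH (commute_inv_mul_inv_mul_of_commute_mul_inv hXYG))

end CommutingGraph

section Ring

variable {R : Type*} [Ring R] {N : Subgroup Rˣ} [N.Normal] {u v n : Rˣ}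

theorem Units.commute_mul_inv_of_val_eq_add (h : (v : R) = u + n) :
    Commute (u * n⁻¹) (v * n⁻¹) := by
  rw [← Commute.units_val_iff, Units.val_mul, Units.val_mul, h, add_mul, Units.mul_inv]
  exact (Commute.refl _).add_right (Commute.one_right _)

theorem QuotientGroup.commute_mk_of_val_eq_add (hn : n ∈ N) (h : (v : R) = u + n) :
    Commute (u : Rˣ ⧸ N) v := by
  simpa [(QuotientGroup.eq_one_iff n).2 hn] using
    (Units.commute_mul_inv_of_val_eq_add h).map (QuotientGroup.mk' N)

theorem QuotientGroup.mk_units_neg (hN : (-1 : Rˣ) ∈ N) (u : Rˣ) :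
    ((-u : Rˣ) : Rˣ ⧸ N) = u := by
  rw [← neg_one_mul, QuotientGroup.mk_mul, (QuotientGroup.eq_one_iff _).2 hN, one_mul]

end Ring

section DivisionRing

variable {D : Type*} [DivisionRing D] {N : Subgroup Dˣ}

theorem exists_units_val_eq_add_notMem (hN : (-1 : Dˣ) ∈ N) {b α : Dˣ} (hb : b ∉ N)
    (hα : α ∈ N) (hbα : (b : D) + α ∉ unitsSet N) : ∃ c : Dˣ, (c : D) = b + α ∧ c ∉ N := by
  have hne : (b : D) + α ≠ 0 := by
    intro h0
    refine hb ?_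
    have : b = -1 * α := Units.ext (by simp [eq_neg_of_add_eq_zero_left h0])
    exact this ▸ N.mul_mem hN hα
  exact ⟨Units.mk0 _ hne, rfl, fun hc => hbα ⟨_, hc, rfl⟩⟩

theorem exists_commutingChain_of_not_subset [N.Normal] (hN : (-1 : Dˣ) ∈ N) {a b : Dˣ}
    (ha : a ∉ N) (hb : b ∉ N) (hab : ¬ nSet N (a : D) ⊆ nSet N (b : D))
    (hba : ¬ nSet N (b : D) ⊆ nSet N (a : D)) : CommutingChain (a : Dˣ ⧸ N) b := by
  obtain ⟨_, ⟨⟨α, hα, rfl⟩, ⟨n, hn, hn'⟩⟩, hbα⟩ := Set.not_subset.mp hab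
  obtain ⟨_, ⟨⟨β, hβ, rfl⟩, ⟨m, hm, hm'⟩⟩, haβ⟩ := Set.not_subset.mp hba
  obtain ⟨c, hc, hcN⟩ := exists_units_val_eq_add_notMem hN hb hα
    fun h => hbα ⟨⟨α, hα, rfl⟩, h⟩
  obtain ⟨e, he, heN⟩ := exists_units_val_eq_add_notMem hN ha hβ
    fun h => haβ ⟨⟨β, hβ, rfl⟩, h⟩
  have hba0 : (b : D) - a ≠ 0 := by
    refine sub_ne_zero.mpr fun h => hab ?_
    rw [h]
  obtain ⟨g, hg⟩ : ∃ g : Dˣ, (g : D) = b - a := ⟨Units.mk0 _ hba0, rfl⟩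
  refine ⟨e, g, c, mt (QuotientGroup.eq_one_iff e).1 heN, mt (QuotientGroup.eq_one_iff c).1 hcN,
    QuotientGroup.commute_mk_of_val_eq_add hβ he, ?_, ?_, ?_, ?_⟩
  · have h := QuotientGroup.commute_mk_of_val_eq_add (u := -g) hm
      (by rw [he, Units.val_neg, hg, hm']; abel)
    rw [QuotientGroup.mk_units_neg hN] at h
    exact h.symm
  · exact QuotientGroup.commute_mk_of_val_eq_add hn (by rw [hc, hg, hn']; abel)
  · exact (QuotientGroup.commute_mk_of_val_eq_add hα hc).symm
  · simpa using (Units.commute_mul_inv_of_val_eq_add (u := a) (v := b) (n := g)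
      (by rw [hg]; abel)).map (QuotientGroup.mk' N)

theorem inRel_of_not_commutingChain [N.Normal] (hF : ∀ x : Dˣ, (x : D) ∈ Set.center D → x ∈ N)
    {x y : Dˣ} (hx : x ∉ N) (hy : y ∉ N) (h : ¬ CommutingChain (x : Dˣ ⧸ N) y) :
    inRel N x y := by
  have hN : (-1 : Dˣ) ∈ N := hF _ (by simp)
  have mk_eq : ∀ {a z : Dˣ}, (∃ n ∈ N, a = n * z) → (a : Dˣ ⧸ N) = z := by
    rintro a z ⟨n, hn, rfl⟩
    rw [QuotientGroup.mk_mul, (QuotientGroup.eq_one_iff n).2 hn, one_mul]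
  have notMem : ∀ {a z : Dˣ}, (a : Dˣ ⧸ N) = z → z ∉ N → a ∉ N := fun haz hz ha =>
    hz ((QuotientGroup.eq_one_iff _).1 (haz ▸ (QuotientGroup.eq_one_iff _).2 ha))
  intro a b ha hb
  by_contra hnest
  rw [not_or] at hnest
  apply h
  rw [← mk_eq ha, ← mk_eq hb]
  exact exists_commutingChain_of_not_subset hN (notMem (mk_eq ha) hx) (notMem (mk_eq hb) hy)
    hnest.1 hnest.2

end DivisionRing

theorem stmt_10_general {D : Type*} [DivisionRing D] (N : Subgroup Dˣ)
    [N.Normal] (hF : ∀ x : Dˣ, (x : D) ∈ Set.center D → x ∈ N)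
    (x y : Dˣ) (hx : x ∉ N) (hy : y ∉ N) :
    -- (1)
    (distGT (commGraph (Dˣ ⧸ N)) (QuotientGroup.mk x) (QuotientGroup.mk y) 4 →
      inRel N x y) ∧
    -- (2)
    (distGT (commGraph (Dˣ ⧸ N)) (QuotientGroup.mk x) (QuotientGroup.mk y) 2 →
      distGT (commGraph (Dˣ ⧸ N)) (QuotientGroup.mk x) (QuotientGroup.mk (x⁻¹ * y)) 3 →
      inRel N x y) := by
  have hX : (QuotientGroup.mk x : Dˣ ⧸ N) ≠ 1 := mt (QuotientGroup.eq_one_iff x).1 hx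
  have hY : (QuotientGroup.mk y : Dˣ ⧸ N) ≠ 1 := mt (QuotientGroup.eq_one_iff y).1 hy
  refine ⟨fun hd => inRel_of_not_commutingChain hF hx hy fun hc => hc.not_distGT_four hX hY hd,
    fun hd hd' => inRel_of_not_commutingChain hF hx hy fun hc => hc.not_distGT_three hX hY hd ?_⟩
  rwa [QuotientGroup.mk_mul, QuotientGroup.mk_inv] at hd'

/-- Each of (1) `d(x*, y*) > 4` and
(2) `d(x*, y*) > 2` together with `d(x*, (x⁻¹y)*) > 3` implies `In(x*, y*)`. -/
theorem stmt_10 {D : Type*} [DivisionRing D] [Infinite D] (N : Subgroup Dˣ)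
    [N.Normal] (hF : ∀ x : Dˣ, (x : D) ∈ Set.center D → x ∈ N)
    (hfin : Finite (Dˣ ⧸ N))
    (x y : Dˣ) (hx : x ∉ N) (hy : y ∉ N) :
    -- (1)
    (distGT (commGraph (Dˣ ⧸ N)) (QuotientGroup.mk x) (QuotientGroup.mk y) 4 →
      inRel N x y) ∧
    -- (2)
    (distGT (commGraph (Dˣ ⧸ N)) (QuotientGroup.mk x) (QuotientGroup.mk y) 2 →
      distGT (commGraph (Dˣ ⧸ N)) (QuotientGroup.mk x) (QuotientGroup.mk (x⁻¹ * y)) 3 →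
      inRel N x y) :=
  stmt_10_general N hF x y hx hy
end

section
/- Assume G satisfies the U-Hypothesis with respect to ℕ; set N̄ := N∖ℕ, U := {n ∈ ℕ : n⁻¹ ∈ ℕ} and M := ℕ∖U. Then: (1) for every n̄ ∈ N̄, n̄ + U = U (as sets) and n̄⁻¹ ∈ ℕ; (2) for every s ∈ N∖U, s ∈ M if and only if s⁻¹ ∈ N̄; (3) for every u ∈ U, uN̄ = N̄u = N̄ and uM = Mu = M; (4) N̄N̄ ⊆ N̄ and MM ⊆ M (setwise products). -/
open scoped Pointwise

/-- `G` satisfies the *U-Hypothesis* with respect to `S`: `S` is a conjugation-invariant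
subset of `G` with `∅ ≠ S ⊊ N` such that (U1) `1, −1 ∈ S`; (U2) `S·S = S`;
(U3) for all `n̄ ∈ N∖S`, `n̄ + 1 ∈ S` and `n̄ − 1 ∈ N`. -/
def UHyp {D : Type*} [DivisionRing D] (N : Subgroup Dˣ) (S : Set D) : Prop :=
  (∀ g : Dˣ, (fun t => (g : D)⁻¹ * t * (g : D)) '' S = S) ∧
  S.Nonempty ∧ S ⊂ unitsSet N ∧
  (1 : D) ∈ S ∧ (-1 : D) ∈ S ∧
  S * S = S ∧
  (∀ t ∈ unitsSet N \ S, t + 1 ∈ S ∧ t - 1 ∈ unitsSet N)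

/-! Write `N̄ = N ∖ S`, so that `U = S ∩ S⁻¹` and `M = S ∖ S⁻¹`. The engine is the observation
that if `b ∈ S` but `b⁻¹ ∉ S`, then (U3) applied to `b⁻¹` gives `1 - b = b (b⁻¹ - 1) ∈ S`.
With `b = a + 1` for `a ∈ N̄` this forces `(a + 1)⁻¹ ∈ S`, i.e. `N̄ + 1 ⊆ U`; with
`b = 1 - a⁻¹` it forces `a⁻¹ ∈ S`. Everything else follows from `S S ⊆ S` by multiplying
with inverses: `N̄ + u = (N̄ u⁻¹ + 1) u ⊆ U` for `u ∈ U`, and `N̄`, `M` are stable under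
multiplication by `U`. -/

lemma mul_mem_unitsSet {D : Type*} [DivisionRing D] {N : Subgroup Dˣ} {x y : D}
    (hx : x ∈ unitsSet N) (hy : y ∈ unitsSet N) : x * y ∈ unitsSet N := by
  obtain ⟨a, ha, rfl⟩ := hx
  obtain ⟨b, hb, rfl⟩ := hy
  exact ⟨a * b, mul_mem ha hb, rfl⟩

lemma inv_mem_unitsSet {D : Type*} [DivisionRing D] {N : Subgroup Dˣ} {x : D}
    (hx : x ∈ unitsSet N) : x⁻¹ ∈ unitsSet N := by
  obtain ⟨a, ha, rfl⟩ := hx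
  exact ⟨a⁻¹, inv_mem ha, by simp⟩

lemma ne_zero_of_mem_unitsSet {D : Type*} [DivisionRing D] {N : Subgroup Dˣ} {x : D}
    (hx : x ∈ unitsSet N) : x ≠ 0 := by
  obtain ⟨a, _, rfl⟩ := hx
  exact a.ne_zero

lemma Set.image_eq_self_of_mapsTo {α : Type*} {f g : α → α} {s : Set α}
    (hf : Set.MapsTo f s s) (hg : Set.MapsTo g s s) (hfg : Function.LeftInverse f g) :
    f '' s = s :=
  Set.Subset.antisymm hf.image_subset fun x hx => ⟨g x, hg hx, hfg x⟩

namespace UHyp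

variable {D : Type*} [DivisionRing D] {N : Subgroup Dˣ} {S : Set D} {a b t u x y : D}

lemma subset (hS : UHyp N S) : S ⊆ unitsSet N := hS.2.2.1.subset

lemma neg_one_mem (hS : UHyp N S) : (-1 : D) ∈ S := hS.2.2.2.2.1

lemma mul_mem (hS : UHyp N S) (hx : x ∈ S) (hy : y ∈ S) : x * y ∈ S :=
  hS.2.2.2.2.2.1 ▸ Set.mul_mem_mul hx hy

lemma add_one_mem (hS : UHyp N S) (ht : t ∈ unitsSet N \ S) : t + 1 ∈ S :=
  (hS.2.2.2.2.2.2 t ht).1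

lemma ne_zero (hS : UHyp N S) (hx : x ∈ S) : x ≠ 0 :=
  ne_zero_of_mem_unitsSet (hS.subset hx)

lemma neg_mem (hS : UHyp N S) (hx : x ∈ S) : -x ∈ S := by
  simpa using hS.mul_mem hS.neg_one_mem hx

lemma neg_mem_compl (hS : UHyp N S) (ht : t ∈ unitsSet N \ S) : -t ∈ unitsSet N \ S := by
  refine ⟨by simpa using mul_mem_unitsSet (hS.subset hS.neg_one_mem) ht.1, fun h => ht.2 ?_⟩
  simpa using hS.neg_mem h

lemma sub_one_mem (hS : UHyp N S) (ht : t ∈ unitsSet N \ S) : t - 1 ∈ S := by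
  by_contra h
  have := hS.add_one_mem ⟨(hS.2.2.2.2.2.2 t ht).2, h⟩
  exact ht.2 (by simpa using this)

lemma one_sub_mem_of_inv_notMem (hS : UHyp N S) (hb : b ∈ S) (hb' : b⁻¹ ∉ S) : 1 - b ∈ S := by
  have h := hS.mul_mem hb (hS.sub_one_mem ⟨inv_mem_unitsSet (hS.subset hb), hb'⟩)
  rwa [mul_sub, mul_inv_cancel₀ (hS.ne_zero hb), mul_one] at h

lemma inv_mem_of_mem_compl (hS : UHyp N S) (ha : a ∈ unitsSet N \ S) : a⁻¹ ∈ S := by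
  by_contra h
  have hb : 1 - a⁻¹ ∈ S := by
    simpa using hS.neg_mem (hS.sub_one_mem ⟨inv_mem_unitsSet ha.1, h⟩)
  by_cases hb' : (1 - a⁻¹)⁻¹ ∈ S
  · have hab : a - 1 = a * (1 - a⁻¹) := by
      rw [mul_sub, mul_one, mul_inv_cancel₀ (ne_zero_of_mem_unitsSet ha.1)]
    have := hS.mul_mem (hS.sub_one_mem ha) hb'
    rw [hab, mul_inv_cancel_right₀ (hS.ne_zero hb)] at this
    exact ha.2 this
  · exact h (by simpa using hS.one_sub_mem_of_inv_notMem hb hb')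

lemma mul_mem_compl (hS : UHyp N S) (ha : a ∈ unitsSet N \ S) (hb : b ∈ unitsSet N \ S) :
    a * b ∈ unitsSet N \ S := by
  refine ⟨mul_mem_unitsSet ha.1 hb.1, fun h => ha.2 ?_⟩
  simpa [ne_zero_of_mem_unitsSet hb.1] using hS.mul_mem h (hS.inv_mem_of_mem_compl hb)

lemma inv_mem_compl_of_mem_diff (hS : UHyp N S) (hx : x ∈ S \ S⁻¹) : x⁻¹ ∈ unitsSet N \ S :=
  ⟨inv_mem_unitsSet (hS.subset hx.1), hx.2⟩

lemma mul_mem_diff (hS : UHyp N S) (hx : x ∈ S \ S⁻¹) (hy : y ∈ S \ S⁻¹) :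
    x * y ∈ S \ S⁻¹ := by
  refine ⟨hS.mul_mem hx.1 hy.1, fun h => ?_⟩
  have := hS.mul_mem_compl (hS.inv_mem_compl_of_mem_diff hy) (hS.inv_mem_compl_of_mem_diff hx)
  exact this.2 (by rwa [← mul_inv_rev])

lemma mul_mem_inter_inv (hS : UHyp N S) (hx : x ∈ S ∩ S⁻¹) (hy : y ∈ S ∩ S⁻¹) :
    x * y ∈ S ∩ S⁻¹ :=
  ⟨hS.mul_mem hx.1 hy.1, by simpa [Set.mem_inv, mul_inv_rev] using hS.mul_mem hy.2 hx.2⟩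

lemma add_one_mem_inter_inv (hS : UHyp N S) (ha : a ∈ unitsSet N \ S) : a + 1 ∈ S ∩ S⁻¹ := by
  refine ⟨hS.add_one_mem ha, by_contra fun h => ha.2 ?_⟩
  simpa using hS.neg_mem (hS.one_sub_mem_of_inv_notMem (hS.add_one_mem ha) h)

lemma mapsTo_mul_left_compl (hS : UHyp N S) (hu : u ∈ S ∩ S⁻¹) :
    Set.MapsTo (u * ·) (unitsSet N \ S) (unitsSet N \ S) := fun x hx =>
  ⟨mul_mem_unitsSet (hS.subset hu.1) hx.1, fun h => hx.2 <| by
    simpa [inv_mul_cancel_left₀ (hS.ne_zero hu.1)] using hS.mul_mem hu.2 h⟩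

lemma mapsTo_mul_right_compl (hS : UHyp N S) (hu : u ∈ S ∩ S⁻¹) :
    Set.MapsTo (· * u) (unitsSet N \ S) (unitsSet N \ S) := fun x hx =>
  ⟨mul_mem_unitsSet hx.1 (hS.subset hu.1), fun h => hx.2 <| by
    simpa [mul_inv_cancel_right₀ (hS.ne_zero hu.1)] using hS.mul_mem h hu.2⟩

lemma mapsTo_mul_left_diff (hS : UHyp N S) (hu : u ∈ S) :
    Set.MapsTo (u * ·) (S \ S⁻¹) (S \ S⁻¹) := fun x hx =>
  ⟨hS.mul_mem hu hx.1, fun h => hx.2 <| by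
    simpa [Set.mem_inv, mul_inv_rev, mul_assoc, inv_mul_cancel₀ (hS.ne_zero hu)]
      using hS.mul_mem h hu⟩

lemma mapsTo_mul_right_diff (hS : UHyp N S) (hu : u ∈ S) :
    Set.MapsTo (· * u) (S \ S⁻¹) (S \ S⁻¹) := fun x hx =>
  ⟨hS.mul_mem hx.1 hu, fun h => hx.2 <| by
    simpa [Set.mem_inv, mul_inv_rev, ← mul_assoc, mul_inv_cancel₀ (hS.ne_zero hu)]
      using hS.mul_mem hu h⟩

lemma add_mem_inter_inv (hS : UHyp N S) (ht : t ∈ unitsSet N \ S) (hu : u ∈ S ∩ S⁻¹) :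
    t + u ∈ S ∩ S⁻¹ := by
  have hu_inv : u⁻¹ ∈ S ∩ S⁻¹ := ⟨hu.2, Set.inv_mem_inv.2 hu.1⟩
  have := hS.mul_mem_inter_inv
    (hS.add_one_mem_inter_inv (hS.mapsTo_mul_right_compl hu_inv ht)) hu
  rwa [add_mul, one_mul, inv_mul_cancel_right₀ (hS.ne_zero hu.1)] at this

lemma image_add_inter_inv (hS : UHyp N S) (ht : t ∈ unitsSet N \ S) :
    (t + ·) '' (S ∩ S⁻¹) = S ∩ S⁻¹ :=
  Set.image_eq_self_of_mapsTo (fun _ => hS.add_mem_inter_inv ht)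
    (fun _ => hS.add_mem_inter_inv (hS.neg_mem_compl ht)) (add_neg_cancel_left t)

lemma image_mul_left_eq (hS : UHyp N S) {X : Set D} (hX : ∀ v ∈ S ∩ S⁻¹, Set.MapsTo (v * ·) X X)
    (hu : u ∈ S ∩ S⁻¹) : (u * ·) '' X = X :=
  Set.image_eq_self_of_mapsTo (hX u hu) (hX u⁻¹ ⟨hu.2, Set.inv_mem_inv.2 hu.1⟩)
    (mul_inv_cancel_left₀ (hS.ne_zero hu.1))

lemma image_mul_right_eq (hS : UHyp N S) {X : Set D} (hX : ∀ v ∈ S ∩ S⁻¹, Set.MapsTo (· * v) X X)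
    (hu : u ∈ S ∩ S⁻¹) : (· * u) '' X = X :=
  Set.image_eq_self_of_mapsTo (hX u hu) (hX u⁻¹ ⟨hu.2, Set.inv_mem_inv.2 hu.1⟩)
    (inv_mul_cancel_right₀ (hS.ne_zero hu.1))

end UHyp

theorem stmt_16_general {D : Type*} [DivisionRing D] (N : Subgroup Dˣ)
    (S : Set D) (hS : UHyp N S)
    (Nbar Us M : Set D)
    (hNbar : Nbar = unitsSet N \ S)
    (hUs : Us = {t : D | t ∈ S ∧ t⁻¹ ∈ S})
    (hM : M = S \ Us) :
    -- (1)
    (∀ t ∈ Nbar, (fun u => t + u) '' Us = Us ∧ t⁻¹ ∈ S) ∧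
    -- (2)
    (∀ s ∈ unitsSet N \ Us, s ∈ M ↔ s⁻¹ ∈ Nbar) ∧
    -- (3)
    (∀ u ∈ Us, (fun s => u * s) '' Nbar = Nbar ∧ (fun s => s * u) '' Nbar = Nbar ∧
      (fun s => u * s) '' M = M ∧ (fun s => s * u) '' M = M) ∧
    -- (4)
    (Nbar * Nbar ⊆ Nbar ∧ M * M ⊆ M) := by
  obtain rfl : Us = S ∩ S⁻¹ := hUs
  subst hNbar hM
  rw [Set.sdiff_self_inter]
  refine ⟨fun t ht => ⟨hS.image_add_inter_inv ht, hS.inv_mem_of_mem_compl ht⟩,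
    fun s hs => ⟨hS.inv_mem_compl_of_mem_diff, fun h => ?_⟩,
    fun u hu => ⟨hS.image_mul_left_eq (fun _ => hS.mapsTo_mul_left_compl) hu,
      hS.image_mul_right_eq (fun _ => hS.mapsTo_mul_right_compl) hu,
      hS.image_mul_left_eq (fun _ hv => hS.mapsTo_mul_left_diff hv.1) hu,
      hS.image_mul_right_eq (fun _ hv => hS.mapsTo_mul_right_diff hv.1) hu⟩,
    Set.mul_subset_iff.2 fun _ ha _ hb => hS.mul_mem_compl ha hb,
    Set.mul_subset_iff.2 fun _ ha _ hb => hS.mul_mem_diff ha hb⟩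
  have hsS : s ∈ S := inv_inv s ▸ hS.inv_mem_of_mem_compl h
  exact ⟨hsS, fun hs' => hs.2 ⟨hsS, hs'⟩⟩

/-- With `N̄ = N∖S`, `U = {n ∈ S : n⁻¹ ∈ S}` and `M = S∖U`:
(1) for all `n̄ ∈ N̄`, `n̄ + U = U` and `n̄⁻¹ ∈ S`; (2) for `s ∈ N∖U`,
`s ∈ M ↔ s⁻¹ ∈ N̄`; (3) for all `u ∈ U`, `uN̄ = N̄u = N̄` and `uM = Mu = M`;
(4) `N̄·N̄ ⊆ N̄` and `M·M ⊆ M`. -/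
theorem stmt_16 {D : Type*} [DivisionRing D] [Infinite D] (N : Subgroup Dˣ)
    [N.Normal] (hF : ∀ x : Dˣ, (x : D) ∈ Set.center D → x ∈ N)
    (hfin : Finite (Dˣ ⧸ N))
    (S : Set D) (hS : UHyp N S)
    (Nbar Us M : Set D)
    (hNbar : Nbar = unitsSet N \ S)
    (hUs : Us = {t : D | t ∈ S ∧ t⁻¹ ∈ S})
    (hM : M = S \ Us) :
    -- (1)
    (∀ t ∈ Nbar, (fun u => t + u) '' Us = Us ∧ t⁻¹ ∈ S) ∧
    -- (2)
    (∀ s ∈ unitsSet N \ Us, s ∈ M ↔ s⁻¹ ∈ Nbar) ∧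
    -- (3)
    (∀ u ∈ Us, (fun s => u * s) '' Nbar = Nbar ∧ (fun s => s * u) '' Nbar = Nbar ∧
      (fun s => u * s) '' M = M ∧ (fun s => s * u) '' M = M) ∧
    -- (4)
    (Nbar * Nbar ⊆ Nbar ∧ M * M ⊆ M) :=
  stmt_16_general N S hS Nbar Us M hNbar hUs hM
end
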